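/- Specialize U_c³ at p = i·q (so p² = −q²): the 2×2 matrices over F given by X₁ = diag(i·q⁻¹, i·q), X₂ = diag(i·q, i·q⁻¹), T₂ = diag(i·q, i·q⁻¹), and T₁ with rows [−q⁻¹, 0], [1, q] satisfy the B₂ affine Hecke relations with p = i·q, and this representation is reducible: the span of the second standard basis vector e₂ is a 1-dimensional subspace invariant under all four matrices (with T₁e₂ = q·e₂, T₂e₂ = i·q⁻¹·e₂, X₁e₂ = i·q·e₂, X₂e₂ = i·q⁻¹·e₂), so U_c³ decomposes into two 1-dimensional composition factors when p² = −q². -/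
import Mathlib


set_option maxHeartbeats 2000000
set_option synthInstance.maxHeartbeats 400000

noncomputable section

/-- `F = ℂ(q)`, the field of rational functions in one indeterminate over `ℂ`. -/
abbrev F : Type := RatFunc ℂ

/-- The indeterminate `q ∈ F`. -/
def qF : F := RatFunc.X

/-- The imaginary unit `i`, viewed as a constant in `F`. -/
def ii : F := RatFunc.C Complex.I

/-- A quadruple of `n × n` matrices over `F` satisfies the `B₂` affine Hecke relations
(with parameters `p`, `q`). -/
def HeckeRelF {n : ℕ} (p q : F) (T₁ T₂ X₁ X₂ : Matrix (Fin n) (Fin n) F) : Prop :=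
  IsUnit X₁ ∧ IsUnit X₂ ∧
  (T₁ - q • 1) * (T₁ + q⁻¹ • 1) = 0 ∧
  (T₂ - p • 1) * (T₂ + p⁻¹ • 1) = 0 ∧
  T₁ * T₂ * T₁ * T₂ = T₂ * T₁ * T₂ * T₁ ∧
  T₁ * X₂ * T₁ = X₁ ∧
  T₂ * X₂⁻¹ * T₂ = X₂ ∧
  T₂ * X₁ = X₁ * T₂ ∧
  X₁ * X₂ = X₂ * X₁

/-- Irreducibility: the only `F`-subspaces of `Fⁿ` invariant under all four matrices
are `0` and `Fⁿ`. -/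
def IsIrredRepF {n : ℕ} (T₁ T₂ X₁ X₂ : Matrix (Fin n) (Fin n) F) : Prop :=
  ∀ U : Submodule F (Fin n → F),
    (∀ v ∈ U, T₁.mulVec v ∈ U) → (∀ v ∈ U, T₂.mulVec v ∈ U) →
    (∀ v ∈ U, X₁.mulVec v ∈ U) → (∀ v ∈ U, X₂.mulVec v ∈ U) →
    U = ⊥ ∨ U = ⊤

/-- `X₁` of `U_c³` specialized at `p = i·q`. -/
def X1c3i : Matrix (Fin 2) (Fin 2) F := !![ii * qF⁻¹, 0; 0, ii * qF]

/-- `X₂` of `U_c³` specialized at `p = i·q`. -/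
def X2c3i : Matrix (Fin 2) (Fin 2) F := !![ii * qF, 0; 0, ii * qF⁻¹]

/-- `T₁` of `U_c³` specialized at `p = i·q`. -/
def T1c3i : Matrix (Fin 2) (Fin 2) F := !![-qF⁻¹, 0; 1, qF]

/-- `T₂` of `U_c³` specialized at `p = i·q`. -/
def T2c3i : Matrix (Fin 2) (Fin 2) F := !![ii * qF, 0; 0, ii * qF⁻¹]

/-- The second standard basis vector of `F²`. -/
def e₂ : Fin 2 → F := Pi.single 1 1


lemma hq : qF ≠ 0 := RatFunc.X_ne_zero

lemma hii : ii * ii = -1 := by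
  rw [ii, ← map_mul, Complex.I_mul_I, map_neg, map_one]

lemma hi : ii ≠ 0 := by
  intro h; have := hii; rw [h, zero_mul] at this; simp at this

lemma hinv : ii⁻¹ = -ii :=
  inv_eq_of_mul_eq_one_right (by linear_combination -hii)

lemma invX2 : X2c3i⁻¹ = !![-(ii * qF⁻¹), 0; 0, -(ii * qF)] := by
  apply Matrix.inv_eq_right_inv
  ext i j
  fin_cases i <;> fin_cases j <;>
    simp [X2c3i, Matrix.mul_apply, Fin.sum_univ_two, Matrix.one_apply]
  all_goals linear_combination (-(qF * qF⁻¹)) * hii + mul_inv_cancel₀ hq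

lemma unit1 : IsUnit X1c3i := by
  have hd : X1c3i.det = -1 := by
    rw [X1c3i, Matrix.det_fin_two_of]
    linear_combination (qF * qF⁻¹) * hii - mul_inv_cancel₀ hq
  rw [Matrix.isUnit_iff_isUnit_det, hd]
  exact isUnit_one.neg

lemma unit2 : IsUnit X2c3i := by
  have hd : X2c3i.det = -1 := by
    rw [X2c3i, Matrix.det_fin_two_of]
    linear_combination (qF * qF⁻¹) * hii - mul_inv_cancel₀ hq
  rw [Matrix.isUnit_iff_isUnit_det, hd]
  exact isUnit_one.neg

lemma he : e₂ ≠ 0 := by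
  intro h
  have : e₂ 1 = 0 := by rw [h]; rfl
  simp [e₂] at this

/-- `U_c³` at `p = i·q` satisfies the `B₂` affine Hecke relations but is reducible:
the span of `e₂` is a 1-dimensional invariant subspace. -/
theorem Uc3_specialized_reducible :
    HeckeRelF (ii * qF) qF T1c3i T2c3i X1c3i X2c3i ∧
    T1c3i.mulVec e₂ = qF • e₂ ∧
    T2c3i.mulVec e₂ = (ii * qF⁻¹) • e₂ ∧
    X1c3i.mulVec e₂ = (ii * qF) • e₂ ∧
    X2c3i.mulVec e₂ = (ii * qF⁻¹) • e₂ ∧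
    Module.finrank F (Submodule.span F {e₂}) = 1 ∧
    Submodule.span F {e₂} ≠ ⊥ ∧ Submodule.span F {e₂} ≠ (⊤ : Submodule F (Fin 2 → F)) := by
  refine ⟨⟨unit1, unit2, ?_, ?_, ?_, ?_, ?_, ?_, ?_⟩, ?_, ?_, ?_, ?_, ?_, ?_, ?_⟩
  · ext i j
    fin_cases i <;> fin_cases j <;>
      simp [T1c3i, Matrix.mul_apply, Fin.sum_univ_two, Matrix.one_apply]
  · ext i j
    fin_cases i <;> fin_cases j <;>
      simp [T2c3i, Matrix.mul_apply, Fin.sum_univ_two, Matrix.one_apply]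
    all_goals (right; rw [hinv]; ring)
  · ext i j
    fin_cases i <;> fin_cases j <;>
      simp [T1c3i, T2c3i, Matrix.mul_apply, Fin.sum_univ_two]
    all_goals ring
  · ext i j
    fin_cases i <;> fin_cases j <;>
      simp [T1c3i, X1c3i, X2c3i, Matrix.mul_apply, Fin.sum_univ_two]
    all_goals try left
    all_goals first
      | ring1
      | linear_combination ii * mul_inv_cancel₀ hq
  · rw [invX2]
    ext i j
    fin_cases i <;> fin_cases j <;>
      simp [T2c3i, X2c3i, Matrix.mul_apply, Fin.sum_univ_two]
    all_goals first
      | linear_combination (-(ii*qF^2*qF⁻¹)) * hii + (ii*qF) * mul_inv_cancel₀ hq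
      | linear_combination (-(ii*qF*qF⁻¹^2)) * hii + (ii*qF⁻¹) * mul_inv_cancel₀ hq
  · ext i j
    fin_cases i <;> fin_cases j <;>
      simp [T2c3i, X1c3i, Matrix.mul_apply, Fin.sum_univ_two] <;> ring
  · ext i j
    fin_cases i <;> fin_cases j <;>
      simp [X1c3i, X2c3i, Matrix.mul_apply, Fin.sum_univ_two] <;> ring
  · ext i
    fin_cases i <;>
      simp [T1c3i, e₂, Matrix.mulVec, dotProduct, Fin.sum_univ_two, Pi.single_apply]
  · ext i
    fin_cases i <;>
      simp [T2c3i, e₂, Matrix.mulVec, dotProduct, Fin.sum_univ_two, Pi.single_apply]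
  · ext i
    fin_cases i <;>
      simp [X1c3i, e₂, Matrix.mulVec, dotProduct, Fin.sum_univ_two, Pi.single_apply]
  · ext i
    fin_cases i <;>
      simp [X2c3i, e₂, Matrix.mulVec, dotProduct, Fin.sum_univ_two, Pi.single_apply]
  · exact finrank_span_singleton he
  · simpa [Submodule.span_singleton_eq_bot] using he
  · intro h
    have h1 : Module.finrank F (Submodule.span F {e₂}) = 1 := finrank_span_singleton he
    rw [h, finrank_top] at h1
    simp [Module.finrank_pi] at h1
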